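/- Let Z₁,...,Z_p be i.i.d. standard normal random variables, t ≥ 0, and θ₁,...,θ_p ∈ [0,1] with Σθᵢ = 1. Then E[Φ(t·√(Σᵢ θᵢ Zᵢ²))] ≥ E[Φ(t·|Z₁|)], where Φ is the standard normal CDF. -/

import Mathlib

open MeasureTheory ProbabilityTheory

/-- The standard normal cumulative distribution function. -/
noncomputable def Phi (x : ℝ) : ℝ := ((gaussianReal 0 1) (Set.Iic x)).toReal

/-- The standard multivariate normal distribution `N(0, I_p)` on `ℝᵖ`
(i.i.d. standard normal coordinates). -/
noncomputable def stdGaussianPi (p : ℕ) : Measure (Fin p → ℝ) :=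
  Measure.pi fun _ => gaussianReal 0 1

/-!
Jensen's inequality for the concave square root and for `Φ`, which is concave on `[0, ∞)` because
its derivative, the Gaussian density, decreases there, gives pointwise
`Φ(t √(∑ θᵢ zᵢ²)) ≥ Φ(t ∑ θᵢ |zᵢ|) ≥ ∑ θᵢ Φ(t |zᵢ|)`. Integrating, every coordinate contributes
the same `E Φ(t |Z|)`, and the weights sum to one.
-/

open Set

theorem hasDerivAt_setIntegral_Iic {f : ℝ → ℝ} (hf : Integrable f) (hfc : Continuous f)
    (x : ℝ) : HasDerivAt (fun y ↦ ∫ s in Iic y, f s) (f x) x := by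
  have hsplit :
      (fun y ↦ ∫ s in Iic y, f s) = fun y ↦ (∫ s in Iic 0, f s) + ∫ s in 0..y, f s := by
    funext y
    rw [← intervalIntegral.integral_Iic_sub_Iic hf.integrableOn hf.integrableOn]
    ring
  rw [hsplit]
  exact (intervalIntegral.integral_hasDerivAt_right hf.intervalIntegrable
    hfc.aestronglyMeasurable.stronglyMeasurableAtFilter hfc.continuousAt).const_add _

theorem concaveOn_setIntegral_Iic {f : ℝ → ℝ} (hf : Integrable f) (hfc : Continuous f) {a : ℝ}
    (hfa : AntitoneOn f (Ici a)) : ConcaveOn ℝ (Ici a) (fun y ↦ ∫ s in Iic y, f s) := by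
  have hderiv := hasDerivAt_setIntegral_Iic hf hfc
  have hdiff : Differentiable ℝ (fun y ↦ ∫ s in Iic y, f s) :=
    fun x ↦ (hderiv x).differentiableAt
  refine AntitoneOn.concaveOn_of_deriv (convex_Ici a) hdiff.continuous.continuousOn
    hdiff.differentiableOn ?_
  rw [interior_Ici]
  intro x hx y hy hxy
  simpa only [(hderiv _).deriv] using hfa (mem_Ici_of_Ioi hx) (mem_Ici_of_Ioi hy) hxy

theorem antitoneOn_gaussianPDFReal (μ : ℝ) (v : NNReal) :
    AntitoneOn (gaussianPDFReal μ v) (Ici μ) := by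
  intro x hx y hy hxy
  rw [gaussianPDFReal, gaussianPDFReal]
  gcongr
  exact sub_nonneg.2 hx

theorem Phi_eq_cdf (x : ℝ) : Phi x = cdf (gaussianReal 0 1) x := by
  rw [cdf_eq_real, measureReal_def, Phi]

theorem Phi_eq_setIntegral (x : ℝ) : Phi x = ∫ y in Iic x, gaussianPDFReal 0 1 y := by
  rw [Phi, gaussianReal_apply_eq_integral 0 one_ne_zero, ENNReal.toReal_ofReal]
  exact setIntegral_nonneg measurableSet_Iic fun y _ ↦ gaussianPDFReal_nonneg 0 1 y

theorem monotone_Phi : Monotone Phi := by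
  simpa only [funext Phi_eq_cdf] using monotone_cdf (gaussianReal 0 1)

theorem concaveOn_Phi : ConcaveOn ℝ (Ici 0) Phi := by
  simpa only [funext Phi_eq_setIntegral] using concaveOn_setIntegral_Iic
    (integrable_gaussianPDFReal 0 1) (by rw [gaussianPDFReal_def]; fun_prop)
    (antitoneOn_gaussianPDFReal 0 1)

theorem integrable_Phi_comp {α : Type*} [MeasurableSpace α] {μ : Measure α} [IsFiniteMeasure μ]
    {f : α → ℝ} (hf : Measurable f) : Integrable (fun x ↦ Phi (f x)) μ := by
  refine (integrable_const (1 : ℝ)).mono' (monotone_Phi.measurable.comp hf).aestronglyMeasurable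
    (ae_of_all _ fun x ↦ ?_)
  rw [Real.norm_eq_abs, Phi_eq_cdf, abs_of_nonneg (cdf_nonneg _ _)]
  exact cdf_le_one _ _

theorem sum_mul_abs_le_sqrt_sum_mul_sq {ι : Type*} (s : Finset ι) {w : ι → ℝ}
    (hw₀ : ∀ i ∈ s, 0 ≤ w i) (hw₁ : ∑ i ∈ s, w i = 1) (x : ι → ℝ) :
    ∑ i ∈ s, w i * |x i| ≤ √(∑ i ∈ s, w i * x i ^ 2) := by
  simpa [smul_eq_mul, Real.sqrt_sq_eq_abs] using
    Real.strictConcaveOn_sqrt.concaveOn.le_map_sum hw₀ hw₁ fun i _ ↦ sq_nonneg (x i)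

theorem sum_mul_comp_abs_le_comp_sqrt_sum_mul_sq {ι : Type*} (s : Finset ι) {g : ℝ → ℝ}
    (hg : Monotone g) (hgc : ConcaveOn ℝ (Ici 0) g) {w : ι → ℝ} (hw₀ : ∀ i ∈ s, 0 ≤ w i)
    (hw₁ : ∑ i ∈ s, w i = 1) {t : ℝ} (ht : 0 ≤ t) (x : ι → ℝ) :
    ∑ i ∈ s, w i * g (t * |x i|) ≤ g (t * √(∑ i ∈ s, w i * x i ^ 2)) :=
  calc ∑ i ∈ s, w i * g (t * |x i|)
      ≤ g (∑ i ∈ s, w i * (t * |x i|)) :=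
        hgc.le_map_sum hw₀ hw₁ fun i _ ↦ mul_nonneg ht (abs_nonneg _)
    _ = g (t * ∑ i ∈ s, w i * |x i|) := by
        rw [Finset.mul_sum]; simp only [mul_left_comm]
    _ ≤ g (t * √(∑ i ∈ s, w i * x i ^ 2)) :=
        hg (mul_le_mul_of_nonneg_left (sum_mul_abs_le_sqrt_sum_mul_sq s hw₀ hw₁ x) ht)

theorem integral_sum_mul_comp_eval {ι X : Type*} [Fintype ι] [MeasurableSpace X]
    {μ : Measure X} [IsProbabilityMeasure μ] {f : X → ℝ} (hf : Integrable f μ) (w : ι → ℝ) :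
    ∫ z, ∑ i, w i * f (z i) ∂Measure.pi (fun _ ↦ μ) = (∑ i, w i) * ∫ x, f x ∂μ := by
  rw [integral_finsetSum _ fun i _ ↦ (integrable_comp_eval hf).const_mul (w i), Finset.sum_mul]
  simp only [integral_const_mul, integral_comp_eval (μ := fun _ ↦ μ) hf.aestronglyMeasurable]

instance isProbabilityMeasure_stdGaussianPi (p : ℕ) : IsProbabilityMeasure (stdGaussianPi p) := by
  unfold stdGaussianPi; infer_instance

/-- For `Z₁,…,Z_p` i.i.d. standard normal, `t ≥ 0`, and convex weights `θᵢ ∈ [0,1]` with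
`Σθᵢ = 1`, one has `E[Φ(t·√(Σθᵢ Zᵢ²))] ≥ E[Φ(t·|Z₁|)]`. -/
theorem expectation_Phi_weighted_ge (p : ℕ) (hp : 0 < p)
    (t : ℝ) (ht : 0 ≤ t) (θ : Fin p → ℝ)
    (hθ : ∀ i, θ i ∈ Set.Icc (0 : ℝ) 1) (hsum : ∑ i, θ i = 1) :
    (∫ z, Phi (t * Real.sqrt (∑ i, θ i * z i ^ 2)) ∂(stdGaussianPi p)) ≥
      ∫ z, Phi (t * |z ⟨0, hp⟩|) ∂(stdGaussianPi p) := by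
  have hθ₀ : ∀ i ∈ Finset.univ, 0 ≤ θ i := fun i _ ↦ (hθ i).1
  have hint : Integrable (fun x : ℝ ↦ Phi (t * |x|)) (gaussianReal 0 1) :=
    integrable_Phi_comp (by fun_prop)
  have hint_sum : Integrable (fun z ↦ ∑ i, θ i * Phi (t * |z i|)) (stdGaussianPi p) :=
    integrable_finsetSum _ fun i _ ↦
      (integrable_comp_eval (μ := fun _ ↦ gaussianReal 0 1) hint).const_mul (θ i)
  calc ∫ z, Phi (t * |z ⟨0, hp⟩|) ∂stdGaussianPi p
      = ∫ z, ∑ i, θ i * Phi (t * |z i|) ∂stdGaussianPi p := by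
        rw [stdGaussianPi, integral_sum_mul_comp_eval hint, hsum, one_mul,
          integral_comp_eval (μ := fun _ ↦ gaussianReal 0 1) hint.aestronglyMeasurable]
    _ ≤ ∫ z, Phi (t * √(∑ i, θ i * z i ^ 2)) ∂stdGaussianPi p :=
        integral_mono hint_sum (integrable_Phi_comp (by fun_prop)) fun z ↦
          sum_mul_comp_abs_le_comp_sqrt_sum_mul_sq _ monotone_Phi concaveOn_Phi hθ₀ hsum ht z
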